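/- Let M ∈ (ℂ[τ])^{m×n}. Then the quotient module ℂ[τ]^{1×n}/⟨M⟩ is torsion free if and only if there exists r ∈ ℕ, r ≤ min(n,m), such that rank(M(t)) = r for all t ∈ ℂ. -/

import Mathlib

open Polynomial

/-- The row module of a polynomial matrix. -/
noncomputable def rowModule {m n : ℕ} (M : Matrix (Fin m) (Fin n) ℂ[X]) :
    Submodule ℂ[X] (Fin n → ℂ[X]) :=
  Submodule.span ℂ[X] (Set.range fun i => M i)

/-!
Take a Smith normal form of the row module `N ⊆ ℂ[X]ⁿ`: a basis `(b j)` of `ℂ[X]ⁿ` and a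
basis `(a i • b (f i))` of `N`. The quotient `ℂ[X]ⁿ / N` is torsion free iff every `a i` is a
unit. Evaluating at `t` keeps the `b j` linearly independent, so `rank M(t)` is the number of
`a i` with `a i (t) ≠ 0`. Away from the finitely many roots of `∏ a i` this is the number of
all `a i`, so it is constant iff no `a i` has a root, i.e. (ℂ being algebraically closed) iff
every `a i` is a unit.
-/

open Finset

namespace Module.Basis.SmithNormalForm

variable {R M ι : Type*} [CommRing R] [AddCommGroup M] [Module R M] {N : Submodule R M} {n : ℕ}
  (snf : Basis.SmithNormalForm N ι n)

lemma a_ne_zero [Nontrivial R] (i : Fin n) : snf.a i ≠ 0 := by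
  intro h
  apply snf.bN.ne_zero i
  ext1
  rw [snf.snf, h, zero_smul, Submodule.coe_zero]

lemma bM_mem_of_isUnit {i : Fin n} (h : IsUnit (snf.a i)) : snf.bM (snf.f i) ∈ N := by
  obtain ⟨u, hu⟩ := h
  have := N.smul_mem (↑u⁻¹ : R) (snf.bN i).2
  rwa [snf.snf, ← hu, smul_smul, Units.inv_mul, one_smul] at this

lemma isUnit_a_of_smul_mem_imp_mem [Nontrivial R]
    (h : ∀ (p : R) (x : M), p ≠ 0 → p • x ∈ N → x ∈ N) (i : Fin n) :
    IsUnit (snf.a i) := by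
  have hmem : snf.bM (snf.f i) ∈ N := h _ _ (snf.a_ne_zero i) (snf.snf i ▸ (snf.bN i).2)
  have := snf.repr_apply_embedding_eq_repr_smul ⟨_, hmem⟩ (i := i)
  rw [map_smul] at this
  simp only [repr_self, Finsupp.single_eq_same, Finsupp.coe_smul, Pi.smul_apply,
    smul_eq_mul] at this
  exact IsUnit.of_mul_eq_one _ this.symm

lemma mem_of_smul_mem [Fintype ι] [NoZeroDivisors R] (h : ∀ i, IsUnit (snf.a i))
    {p : R} {x : M} (hp : p ≠ 0) (hpx : p • x ∈ N) : x ∈ N := by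
  rw [← snf.bM.sum_repr x]
  refine N.sum_mem fun j _ => ?_
  by_cases hj : j ∈ Set.range snf.f
  · obtain ⟨i, rfl⟩ := hj
    exact N.smul_mem _ (snf.bM_mem_of_isUnit (h i))
  · have : p * snf.bM.repr x j = 0 := by
      simpa using snf.repr_eq_zero_of_notMem_range ⟨_, hpx⟩ hj
    simp [(mul_eq_zero.mp this).resolve_left hp]

theorem forall_isUnit_a_iff [Fintype ι] [IsDomain R] :
    (∀ i, IsUnit (snf.a i)) ↔ ∀ (p : R) (x : M), p ≠ 0 → p • x ∈ N → x ∈ N :=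
  ⟨fun h _ _ => snf.mem_of_smul_mem h, snf.isUnit_a_of_smul_mem_imp_mem⟩

end Module.Basis.SmithNormalForm

section

variable {R K ι : Type*} [CommRing R] [Field K] (φ : R →+* K)

lemma Module.Basis.linearIndependent_map [Fintype ι] [DecidableEq ι] (b : Basis ι R (ι → R)) :
    LinearIndependent K fun j => φ ∘ b j := by
  have hb := @isUnit_of_invertible _ _ _ ((Pi.basisFun R ι).invertibleToMatrix b)
  exact Matrix.linearIndependent_cols_iff_isUnit.mpr (hb.map φ.mapMatrix)

lemma span_range_map_le_of_mem_span {α β : Type*} [Fintype α] {u : α → ι → R}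
    {w : β → ι → R} (h : ∀ b, w b ∈ Submodule.span R (Set.range u)) :
    Submodule.span K (Set.range fun b => φ ∘ w b) ≤
      Submodule.span K (Set.range fun a => φ ∘ u a) := by
  rw [Submodule.span_le, Set.range_subset_iff]
  intro b
  obtain ⟨c, hc⟩ := (Submodule.mem_span_range_iff_exists_fun R).mp (h b)
  rw [SetLike.mem_coe, Submodule.mem_span_range_iff_exists_fun]
  refine ⟨fun a => φ (c a), ?_⟩
  ext j
  simp [← hc, Finset.sum_apply, map_sum]

end

lemma finrank_span_range_smul_eq_card {K V β : Type*} [Field K] [AddCommGroup V] [Module K V]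
    [Fintype β] {v : β → V} (hv : LinearIndependent K v) (s : β → K)
    [DecidablePred (s · ≠ 0)] :
    Module.finrank K (Submodule.span K (Set.range fun i => s i • v i)) = #{i | s i ≠ 0} := by
  have hspan : Submodule.span K (Set.range fun i => s i • v i) =
      Submodule.span K (Set.range fun i : {i // s i ≠ 0} => s i • v i) := by
    refine le_antisymm (Submodule.span_le.mpr <| Set.range_subset_iff.mpr fun i => ?_)
      (Submodule.span_mono fun _ ⟨i, hi⟩ => ⟨i, hi⟩)
    by_cases hi : s i = 0
    · simp [hi]
    · exact Submodule.subset_span ⟨⟨i, hi⟩, rfl⟩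
  have hli : LinearIndependent K fun i : {i // s i ≠ 0} => s i • v i :=
    (hv.comp _ Subtype.val_injective).units_smul fun i => Units.mk0 _ i.2
  rw [hspan, finrank_span_eq_card hli, Fintype.card_subtype]

theorem Module.Basis.SmithNormalForm.rank_map_eq_card {R K κ ι : Type*} [CommRing R] [Field K]
    [DecidableEq K] [Fintype κ] [Fintype ι] [DecidableEq ι] {n : ℕ} {A : Matrix κ ι R}
    (snf : Basis.SmithNormalForm (Submodule.span R (Set.range fun k => A k)) ι n)
    (φ : R →+* K) :
    (A.map φ).rank = #{i | φ (snf.a i) ≠ 0} := by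
  have hA (k : κ) : A k ∈ Submodule.span R (Set.range fun i => (snf.bN i : ι → R)) := by
    have := Submodule.apply_mem_span_image_of_mem_span (Submodule.subtype _)
      (snf.bN.mem_span ⟨A k, Submodule.subset_span ⟨k, rfl⟩⟩)
    rwa [← Set.range_comp] at this
  have hrows : Submodule.span K (Set.range (A.map φ).row) =
      Submodule.span K (Set.range fun i => φ (snf.a i) • φ ∘ snf.bM (snf.f i)) := by
    have hbN (i : Fin n) :
        φ ∘ (snf.bN i : ι → R) = φ (snf.a i) • φ ∘ snf.bM (snf.f i) := by
      ext j
      simp [snf.snf]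
    simp_rw [← hbN]
    exact le_antisymm (span_range_map_le_of_mem_span φ hA)
      (span_range_map_le_of_mem_span φ fun i => (snf.bN i).2)
  rw [Matrix.rank_eq_finrank_span_row, hrows]
  exact finrank_span_range_smul_eq_card
    ((snf.bM.linearIndependent_map φ).comp _ snf.f.injective) _

lemma Polynomial.exists_forall_eval_ne_zero {R β : Type*} [CommRing R] [IsDomain R] [Infinite R]
    [Fintype β] {a : β → R[X]} (ha : ∀ i, a i ≠ 0) : ∃ t, ∀ i, (a i).eval t ≠ 0 := by
  by_contra! h
  refine (prod_ne_zero_iff.mpr fun i _ => ha i : ∏ i, a i ≠ 0) (funext fun t => ?_)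
  obtain ⟨i, hi⟩ := h t
  rw [eval_prod, eval_zero]
  exact prod_eq_zero (mem_univ i) hi

lemma Polynomial.forall_isUnit_iff_exists_card_eval_ne_zero {K β : Type*} [Field K]
    [IsAlgClosed K] [DecidableEq K] [Fintype β] {a : β → K[X]} (ha : ∀ i, a i ≠ 0) :
    (∀ i, IsUnit (a i)) ↔ ∃ r, ∀ t, #{i | (a i).eval t ≠ 0} = r := by
  constructor
  · refine fun h => ⟨Fintype.card β, fun t => ?_⟩
    rw [filter_true_of_mem, card_univ]
    intro i _
    obtain ⟨c, hc, hca⟩ := Polynomial.isUnit_iff.mp (h i)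
    rw [← hca, eval_C]
    exact hc.ne_zero
  · rintro ⟨r, hr⟩ i
    by_contra hi
    obtain ⟨t₀, ht₀⟩ := IsAlgClosed.exists_root (a i) (mt isUnit_iff_degree_eq_zero.mpr hi)
    obtain ⟨t₁, ht₁⟩ := exists_forall_eval_ne_zero ha
    have hlt : #{i | (a i).eval t₀ ≠ 0} < #{i | (a i).eval t₁ ≠ 0} := by
      rw [filter_true_of_mem fun i _ => ht₁ i]
      exact card_lt_card (filter_ssubset.mpr ⟨i, mem_univ i, not_not.mpr ht₀⟩)
    exact hlt.ne ((hr t₀).trans (hr t₁).symm)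

theorem stmt2 {m n : ℕ} (M : Matrix (Fin m) (Fin n) ℂ[X]) :
    (∀ (p : ℂ[X]) (x : Fin n → ℂ[X]),
        p ≠ 0 → p • x ∈ rowModule M → x ∈ rowModule M) ↔
    (∃ r : ℕ, r ≤ min n m ∧ ∀ t : ℂ, (M.map (Polynomial.eval t)).rank = r) := by
  classical
  obtain ⟨n', snf⟩ := (rowModule M).smithNormalForm (Pi.basisFun ℂ[X] (Fin n))
  have hrank (t : ℂ) : (M.map (eval t)).rank = #{i | (snf.a i).eval t ≠ 0} :=
    snf.rank_map_eq_card (evalRingHom t)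
  simp_rw [← snf.forall_isUnit_a_iff, forall_isUnit_iff_exists_card_eval_ne_zero snf.a_ne_zero,
    ← hrank]
  refine ⟨fun ⟨r, hr⟩ => ⟨r, ?_, hr⟩, fun ⟨r, _, hr⟩ => ⟨r, hr⟩⟩
  rw [← hr 0]
  exact le_min (Matrix.rank_le_card_width _ |>.trans_eq (Fintype.card_fin n))
    (Matrix.rank_le_card_height _ |>.trans_eq (Fintype.card_fin m))
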